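/- Let m ≥ 3 and let p : Fin m → ℝ² be points in counterclockwise strictly convex position, meaning that for all indices i < j < k the determinant det(p(j) − p(i), p(k) − p(i)) is strictly positive. Let σ : ZMod m → Fin m be a bijection (a Hamiltonian cycle on the points) such that for all s, t ∈ ZMod m with {σ(s), σ(s+1)} ≠ {σ(t), σ(t+1)}, the open segments openSegment(p(σ(s)), p(σ(s+1))) and openSegment(p(σ(t)), p(σ(t+1))) are disjoint (the cycle is non-crossing). Then the edge set {{σ(t), σ(t+1)} : t ∈ ZMod m} equals the edge set of the boundary cycle in convex order, namely {{a, a+1} : a ∈ Fin m, a+1 < m} ∪ {{0, m−1}}. (The only plane Hamiltonian cycle on points in convex position is the convex polygon boundary.) -/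
import Mathlib

/-- The 2×2 determinant `det((x₁,y₁),(x₂,y₂)) = x₁y₂ − x₂y₁` of two plane vectors. -/
def det2 (u v : ℝ × ℝ) : ℝ := u.1 * v.2 - u.2 * v.1

lemma det2_swap (u v : ℝ × ℝ) : det2 u v = - det2 v u := by simp [det2]; ring

lemma det2_cycle (x y z : ℝ × ℝ) : det2 (x - z) (y - z) = det2 (y - x) (z - x) := by
  simp [det2]; ring

lemma ratio_mem {x y : ℝ} (h : x * y < 0) : 0 < x / (x - y) ∧ x / (x - y) < 1 := by
  rcases mul_neg_iff.mp h with ⟨hx, hy⟩ | ⟨hx, hy⟩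
  · exact ⟨div_pos hx (by linarith), (div_lt_one (by linarith)).mpr (by linarith)⟩
  · have h1 : x / (x - y) = (-x) / (y - x) := by
      rw [← neg_div_neg_eq]; ring_nf
    rw [h1]
    exact ⟨div_pos (by linarith) (by linarith), (div_lt_one (by linarith)).mpr (by linarith)⟩

lemma segments_cross (A B U V : ℝ × ℝ)
    (h1 : det2 (B - A) (U - A) * det2 (B - A) (V - A) < 0)
    (h2 : det2 (V - U) (A - U) * det2 (V - U) (B - U) < 0) :
    (openSegment ℝ A B ∩ openSegment ℝ U V).Nonempty := by
  obtain ⟨hr0, hr1⟩ := ratio_mem h2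
  obtain ⟨hs0, hs1⟩ := ratio_mem h1
  have hne1 : det2 (V - U) (A - U) - det2 (V - U) (B - U) ≠ 0 := by
    intro h; rw [sub_eq_zero] at h; rw [h] at h2
    exact (mul_self_nonneg _).not_gt h2
  have hne2 : det2 (B - A) (U - A) - det2 (B - A) (V - A) ≠ 0 := by
    intro h; rw [sub_eq_zero] at h; rw [h] at h1
    exact (mul_self_nonneg _).not_gt h1
  refine ⟨(1 - det2 (V - U) (A - U) / (det2 (V - U) (A - U) - det2 (V - U) (B - U))) • A
        + (det2 (V - U) (A - U) / (det2 (V - U) (A - U) - det2 (V - U) (B - U))) • B, ?_, ?_⟩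
  · rw [openSegment_eq_image]; exact ⟨_, ⟨hr0, hr1⟩, rfl⟩
  · rw [openSegment_eq_image]
    refine ⟨det2 (B - A) (U - A) / (det2 (B - A) (U - A) - det2 (B - A) (V - A)), ⟨hs0, hs1⟩, ?_⟩
    obtain ⟨a1, a2⟩ := A; obtain ⟨b1, b2⟩ := B; obtain ⟨u1, u2⟩ := U; obtain ⟨v1, v2⟩ := V
    simp only [det2, Prod.mk_sub_mk, Prod.smul_mk, Prod.mk_add_mk, Prod.mk.injEq,
      smul_eq_mul] at *
    constructor <;> field_simp <;> ring

lemma chord_cross {m : ℕ} (p : Fin m → ℝ × ℝ)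
    (hconv : ∀ i j k : Fin m, i < j → j < k → 0 < det2 (p j - p i) (p k - p i))
    {a b u v : Fin m} (hau : a < u) (hub : u < b) (hv : v < a ∨ b < v) :
    (openSegment ℝ (p a) (p b) ∩ openSegment ℝ (p u) (p v)).Nonempty := by
  have hab : a < b := lt_trans hau hub
  apply segments_cross
  · have hneg : det2 (p b - p a) (p u - p a) < 0 := by
      have h := hconv a u b hau hub
      rw [det2_swap] at h; linarith
    have hpos : 0 < det2 (p b - p a) (p v - p a) := by
      rcases hv with hv | hv
      · have h := hconv v a b hv hab
        rwa [det2_cycle] at h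
      · exact hconv a b v hab hv
    exact mul_neg_of_neg_of_pos hneg hpos
  · have hpos : 0 < det2 (p v - p u) (p a - p u) := by
      rcases hv with hv | hv
      · have h := hconv v a u hv hau
        rwa [det2_cycle, det2_cycle] at h
      · have h := hconv a u v hau (lt_trans hub hv)
        rwa [det2_cycle] at h
    have hneg : det2 (p v - p u) (p b - p u) < 0 := by
      rcases hv with hv | hv
      · have h := hconv v u b (lt_trans hv hau) hub
        rw [det2_cycle, det2_swap] at h; linarith
      · have h := hconv u b v hub hv
        rw [det2_swap] at h; linarith
    exact mul_neg_of_pos_of_neg hpos hneg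

lemma discrete_ivt (h : ℕ → Prop) {i j : ℕ} (hij : i ≤ j) (hi : h i) (hj : ¬ h j) :
    ∃ k, i ≤ k ∧ k < j ∧ h k ∧ ¬ h (k + 1) := by
  by_contra hc
  push_neg at hc
  apply hj
  have key : ∀ d, i + d ≤ j → h (i + d) := by
    intro d
    induction d with
    | zero => intro _; simpa using hi
    | succ n ih =>
      intro hle
      have h1 := ih (by omega)
      have := hc (i + n) (by omega) (by omega) h1
      exact this
  have := key (j - i) (by omega)
  simpa [Nat.add_sub_cancel' hij] using this

lemma finset_pair_eq {α : Type*} [DecidableEq α] {x y z w : α}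
    (h : ({x, y} : Finset α) = {z, w}) : (x = z ∧ y = w) ∨ (x = w ∧ y = z) := by
  have h' : ({x, y} : Set α) = {z, w} := by
    have := congrArg (fun s : Finset α => (s : Set α)) h
    simpa using this
  rcases Set.pair_eq_pair_iff.mp h' with ⟨h1, h2⟩ | ⟨h1, h2⟩
  · exact Or.inl ⟨h1, h2⟩
  · exact Or.inr ⟨h1, h2⟩

/-- The only plane (non-crossing) Hamiltonian cycle on `m ≥ 3` points in
counterclockwise strictly convex position is the boundary of the convex polygon:
if `σ : ZMod m → Fin m` is a bijection such that edges of the cycle with distinct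
vertex sets have disjoint open segments, then the edge set
`{{σ t, σ (t+1)} : t ∈ ZMod m}` is `{{a, a+1} : a + 1 < m} ∪ {{0, m−1}}`. -/
theorem plane_hamiltonian_cycle_on_convex_position (m : ℕ) (hm : 3 ≤ m)
    (p : Fin m → ℝ × ℝ)
    (hconv : ∀ i j k : Fin m, i < j → j < k → 0 < det2 (p j - p i) (p k - p i))
    (σ : ZMod m → Fin m) (hσ : Function.Bijective σ)
    (hplane : ∀ s t : ZMod m,
      ({σ s, σ (s + 1)} : Finset (Fin m)) ≠ ({σ t, σ (t + 1)} : Finset (Fin m)) →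
      openSegment ℝ (p (σ s)) (p (σ (s + 1))) ∩
        openSegment ℝ (p (σ t)) (p (σ (t + 1))) = ∅) :
    {e : Finset (Fin m) | ∃ t : ZMod m, e = {σ t, σ (t + 1)}} =
      {e : Finset (Fin m) | ∃ a : ℕ, ∃ h : a + 1 < m,
          e = {⟨a, by omega⟩, ⟨a + 1, h⟩}} ∪
        {({⟨0, by omega⟩, ⟨m - 1, by omega⟩} : Finset (Fin m))} := by
  haveI : NeZero m := ⟨by omega⟩
  haveI : Fact (1 < m) := ⟨by omega⟩
  have hone : (1 : ZMod m) ≠ 0 := one_ne_zero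
  have hσinj := hσ.1
  have hdvd : ∀ k : ℕ, (k : ZMod m) = 0 → m ∣ k := fun k hk =>
    (ZMod.natCast_eq_zero_iff k m).mp hk
  -- Step A: every edge of the cycle is a boundary edge
  have hbound : ∀ t : ZMod m,
      (∃ a : ℕ, ∃ h : a + 1 < m,
        ({σ t, σ (t + 1)} : Finset (Fin m)) = {⟨a, by omega⟩, ⟨a + 1, h⟩}) ∨
      ({σ t, σ (t + 1)} : Finset (Fin m))
        = ({⟨0, by omega⟩, ⟨m - 1, by omega⟩} : Finset (Fin m)) := by
    intro t
    by_contra hcon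
    push_neg at hcon
    obtain ⟨hcon1, hcon2⟩ := hcon
    have htne : t ≠ t + 1 := by
      intro h; exact hone (left_eq_add.mp h)
    obtain ⟨a, b, hab, hor⟩ : ∃ a b : Fin m, a < b ∧
        ((a = σ t ∧ b = σ (t + 1)) ∨ (a = σ (t + 1) ∧ b = σ t)) := by
      rcases lt_trichotomy (σ t) (σ (t + 1)) with h | h | h
      · exact ⟨_, _, h, Or.inl ⟨rfl, rfl⟩⟩
      · exact absurd (hσinj h) htne
      · exact ⟨_, _, h, Or.inr ⟨rfl, rfl⟩⟩
    have hedge : ({σ t, σ (t + 1)} : Finset (Fin m)) = {a, b} := by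
      rcases hor with ⟨h1, h2⟩ | ⟨h1, h2⟩
      · rw [h1, h2]
      · rw [h1, h2, Finset.pair_comm]
    have habv : a.val < b.val := hab
    have hnadj : b.val ≠ a.val + 1 := by
      intro hv
      refine hcon1 a.val (by omega) ?_
      rw [hedge, show (⟨a.val + 1, by omega⟩ : Fin m) = b from Fin.ext hv.symm, Fin.eta]
    have hn0 : ¬ (a.val = 0 ∧ b.val = m - 1) := by
      rintro ⟨h0, h1⟩
      refine hcon2 ?_
      rw [hedge, show (⟨0, by omega⟩ : Fin m) = a from Fin.ext h0.symm,
        show (⟨m - 1, by omega⟩ : Fin m) = b from Fin.ext h1.symm]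
    -- inside and outside witnesses
    set u0 : Fin m := ⟨a.val + 1, by omega⟩ with hu0def
    have hau0 : a < u0 := by simp only [Fin.lt_def, hu0def]; omega
    have hu0b : u0 < b := by simp only [Fin.lt_def, hu0def]; omega
    obtain ⟨v0, hv0⟩ : ∃ v0 : Fin m, v0 < a ∨ b < v0 := by
      by_cases h0 : a.val = 0
      · refine ⟨⟨m - 1, by omega⟩, Or.inr ?_⟩
        have : b.val ≠ m - 1 := fun h => hn0 ⟨h0, h⟩
        simp only [Fin.lt_def]
        omega
      · exact ⟨⟨0, by omega⟩, Or.inl (by simp only [Fin.lt_def]; omega)⟩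
    have hST : ∀ w : Fin m, (a < w ∧ w < b) → ¬(w < a ∨ b < w) := by
      intro w hw h
      simp only [Fin.lt_def] at hw h
      rcases h with h | h <;> omega
    -- the walk
    set g : ℕ → Fin m := fun k => σ (t + 1 + (k : ZMod m)) with hgdef
    have hg_ne : ∀ k : ℕ, 1 ≤ k → k ≤ m - 2 → g k ≠ σ t ∧ g k ≠ σ (t + 1) := by
      intro k hk1 hk2
      constructor
      · intro h
        have h' := hσinj h
        rw [add_assoc] at h'
        have h0 : (1 : ZMod m) + (k : ZMod m) = 0 := add_eq_left.mp h'
        have h1 : ((1 + k : ℕ) : ZMod m) = 0 := by push_cast; exact h0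
        have := Nat.le_of_dvd (by omega) (hdvd _ h1)
        omega
      · intro h
        have h' := hσinj h
        have h0 : ((k : ℕ) : ZMod m) = 0 := add_eq_left.mp h'
        have := Nat.le_of_dvd (by omega) (hdvd _ h0)
        omega
    have hg_side : ∀ k : ℕ, 1 ≤ k → k ≤ m - 2 →
        (a < g k ∧ g k < b) ∨ (g k < a ∨ b < g k) := by
      intro k hk1 hk2
      obtain ⟨hne1, hne2⟩ := hg_ne k hk1 hk2
      have hga : g k ≠ a := by
        rcases hor with ⟨h1, _⟩ | ⟨h1, _⟩
        · rw [h1]; exact hne1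
        · rw [h1]; exact hne2
      have hgb : g k ≠ b := by
        rcases hor with ⟨_, h2⟩ | ⟨_, h2⟩
        · rw [h2]; exact hne2
        · rw [h2]; exact hne1
      rcases lt_trichotomy (g k) a with h | h | h
      · exact Or.inr (Or.inl h)
      · exact absurd h hga
      rcases lt_trichotomy (g k) b with h' | h' | h'
      · exact Or.inl ⟨h, h'⟩
      · exact absurd h' hgb
      · exact Or.inr (Or.inr h')
    have hcover : ∀ w : Fin m, w ≠ σ t → w ≠ σ (t + 1) →
        ∃ k : ℕ, 1 ≤ k ∧ k ≤ m - 2 ∧ g k = w := by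
      intro w hw1 hw2
      obtain ⟨s1, hs1⟩ := hσ.2 w
      have hst : s1 ≠ t := fun h => hw1 (h ▸ hs1).symm
      have hst1 : s1 ≠ t + 1 := fun h => hw2 (h ▸ hs1).symm
      set k := (s1 - (t + 1)).val with hkdef
      have hcast : ((k : ℕ) : ZMod m) = s1 - (t + 1) := ZMod.natCast_rightInverse _
      have hklt : k < m := ZMod.val_lt _
      have hk0 : k ≠ 0 := by
        intro h
        apply hst1
        have h1 : s1 - (t + 1) = 0 := by rw [← hcast, h]; simp
        exact sub_eq_zero.mp h1
      have hkm1 : k ≠ m - 1 := by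
        intro h
        apply hst
        have h1 : s1 - (t + 1) = ((m - 1 : ℕ) : ZMod m) := by rw [← hcast, h]
        have h2 : ((m - 1 : ℕ) : ZMod m) + 1 = 0 := by
          have h3 : (((m - 1) + 1 : ℕ) : ZMod m) = 0 := by
            rw [show (m - 1) + 1 = m by omega]; exact ZMod.natCast_self m
          push_cast at h3; exact h3
        have h3 : s1 - t = 0 := by
          have h4 : s1 - t = (s1 - (t + 1)) + 1 := by ring
          rw [h4, h1, h2]
        exact sub_eq_zero.mp h3
      refine ⟨k, by omega, by omega, ?_⟩
      show σ (t + 1 + ((k : ℕ) : ZMod m)) = w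
      rw [hcast, show t + 1 + (s1 - (t + 1)) = s1 by ring]
      exact hs1
    have hu0ne : u0 ≠ σ t ∧ u0 ≠ σ (t + 1) := by
      have h1 : u0 ≠ a := ne_of_gt hau0
      have h2 : u0 ≠ b := ne_of_lt hu0b
      rcases hor with ⟨ha, hb⟩ | ⟨ha, hb⟩
      · exact ⟨ha ▸ h1, hb ▸ h2⟩
      · exact ⟨hb ▸ h2, ha ▸ h1⟩
    have hv0ne : v0 ≠ σ t ∧ v0 ≠ σ (t + 1) := by
      have h1 : v0 ≠ a := by
        rcases hv0 with h | h
        · exact ne_of_lt h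
        · exact ne_of_gt (lt_trans hab h)
      have h2 : v0 ≠ b := by
        rcases hv0 with h | h
        · exact ne_of_lt (lt_trans h hab)
        · exact ne_of_gt h
      rcases hor with ⟨ha, hb⟩ | ⟨ha, hb⟩
      · exact ⟨ha ▸ h1, hb ▸ h2⟩
      · exact ⟨hb ▸ h2, ha ▸ h1⟩
    obtain ⟨k1, hk11, hk12, hgk1⟩ := hcover u0 hu0ne.1 hu0ne.2
    obtain ⟨k2, hk21, hk22, hgk2⟩ := hcover v0 hv0ne.1 hv0ne.2
    have huv : u0 ≠ v0 := fun h => hST u0 ⟨hau0, hu0b⟩ (h ▸ hv0)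
    have hk1k2 : k1 ≠ k2 := fun h => huv (by rw [← hgk1, h, hgk2])
    -- the final contradiction
    have hfinal : ∀ k : ℕ, 1 ≤ k → k + 1 ≤ m - 2 →
        (openSegment ℝ (p a) (p b) ∩
          openSegment ℝ (p (g k)) (p (g (k + 1)))).Nonempty → False := by
      intro k hk1 hk2 hne
      set s' := t + 1 + ((k : ℕ) : ZMod m) with hs'def
      have hgk : g k = σ s' := rfl
      have hgk1' : g (k + 1) = σ (s' + 1) := by
        show σ (t + 1 + (((k + 1 : ℕ)) : ZMod m)) = σ (s' + 1)
        congr 1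
        rw [hs'def]; push_cast; ring
      have hne_edge : ({σ t, σ (t + 1)} : Finset (Fin m)) ≠ {σ s', σ (s' + 1)} := by
        intro h
        have hmem : σ s' ∈ ({σ t, σ (t + 1)} : Finset (Fin m)) := by
          rw [h]; exact Finset.mem_insert_self _ _
        simp only [Finset.mem_insert, Finset.mem_singleton] at hmem
        obtain ⟨hne1, hne2⟩ := hg_ne k (by omega) (by omega)
        rw [hgk] at hne1 hne2
        rcases hmem with h' | h'
        · exact hne1 h'
        · exact hne2 h'
      have hdisj := hplane t s' hne_edge
      have hseg1 : openSegment ℝ (p (σ t)) (p (σ (t + 1))) = openSegment ℝ (p a) (p b) := by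
        rcases hor with ⟨h1', h2'⟩ | ⟨h1', h2'⟩
        · rw [h1', h2']
        · rw [h1', h2', openSegment_symm]
      rw [hseg1] at hdisj
      rw [hgk, hgk1'] at hne
      exact (Set.nonempty_iff_ne_empty.mp hne) hdisj
    rcases lt_or_gt_of_ne hk1k2 with hlt | hlt
    · obtain ⟨k, hkk1, hkk2, hS, hnS⟩ := discrete_ivt (fun k => a < g k ∧ g k < b)
        hlt.le (by show a < g k1 ∧ g k1 < b; rw [hgk1]; exact ⟨hau0, hu0b⟩)
        (fun hS => hST _ hS (by show g k2 < a ∨ b < g k2; rw [hgk2]; exact hv0))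
      have hT : g (k + 1) < a ∨ b < g (k + 1) := by
        rcases hg_side (k + 1) (by omega) (by omega) with h | h
        · exact absurd h hnS
        · exact h
      exact hfinal k (by omega) (by omega) (chord_cross p hconv hS.1 hS.2 hT)
    · obtain ⟨k, hkk1, hkk2, hT, hnT⟩ := discrete_ivt (fun k => g k < a ∨ b < g k)
        hlt.le (by show g k2 < a ∨ b < g k2; rw [hgk2]; exact hv0)
        (fun hT => hST _ (by show a < g k1 ∧ g k1 < b; rw [hgk1]; exact ⟨hau0, hu0b⟩) hT)
      have hS : a < g (k + 1) ∧ g (k + 1) < b := by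
        rcases hg_side (k + 1) (by omega) (by omega) with h | h
        · exact h
        · exact absurd h hnT
      have hcr := chord_cross p hconv hS.1 hS.2 hT
      rw [show openSegment ℝ (p (g (k + 1))) (p (g k))
          = openSegment ℝ (p (g k)) (p (g (k + 1))) from openSegment_symm ℝ _ _] at hcr
      exact hfinal k (by omega) (by omega) hcr
  -- Step B: counting
  have hfinj : Function.Injective (fun t : ZMod m => ({σ t, σ (t + 1)} : Finset (Fin m))) := by
    intro s t h
    simp only at h
    rcases finset_pair_eq h with ⟨h1, h2⟩ | ⟨h1, h2⟩
    · exact hσinj h1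
    · have hs : s = t + 1 := hσinj h1
      have ht : s + 1 = t := hσinj h2
      have h2m : ((2 : ℕ) : ZMod m) = 0 := by
        have h1 : t + (1 + 1) = t := by rw [← add_assoc, ← hs]; exact ht
        have h0 : (1 + 1 : ZMod m) = 0 := left_eq_add.mp h1.symm
        rw [one_add_one_eq_two] at h0
        push_cast
        exact h0
      have := Nat.le_of_dvd (by omega) (hdvd _ h2m)
      omega
  have hsub : {e : Finset (Fin m) | ∃ t : ZMod m, e = {σ t, σ (t + 1)}} ⊆
      {e : Finset (Fin m) | ∃ a : ℕ, ∃ h : a + 1 < m,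
          e = {⟨a, by omega⟩, ⟨a + 1, h⟩}} ∪
        {({⟨0, by omega⟩, ⟨m - 1, by omega⟩} : Finset (Fin m))} := by
    rintro e ⟨t, rfl⟩
    rcases hbound t with h | h
    · exact Or.inl h
    · exact Or.inr h
  set G : ℕ → Finset (Fin m) := fun a =>
    if h : a + 1 < m then ({⟨a, by omega⟩, ⟨a + 1, h⟩} : Finset (Fin m))
    else ({⟨0, by omega⟩, ⟨m - 1, by omega⟩} : Finset (Fin m)) with hGdef
  have hRsub : ({e : Finset (Fin m) | ∃ a : ℕ, ∃ h : a + 1 < m,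
          e = {⟨a, by omega⟩, ⟨a + 1, h⟩}} ∪
        {({⟨0, by omega⟩, ⟨m - 1, by omega⟩} : Finset (Fin m))}) ⊆ G '' Set.Iio m := by
    rintro e (⟨a, h, rfl⟩ | he)
    · exact ⟨a, Set.mem_Iio.mpr (by omega), by rw [hGdef]; simp only [dif_pos h]⟩
    · refine ⟨m - 1, Set.mem_Iio.mpr (by omega), ?_⟩
      rw [hGdef]
      simp only [dif_neg (show ¬ (m - 1 + 1 < m) by omega)]
      simp only [Set.mem_singleton_iff] at he
      rw [he]
  have hRfin : (G '' Set.Iio m).Finite := (Set.finite_Iio m).image G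
  have hRcard : ({e : Finset (Fin m) | ∃ a : ℕ, ∃ h : a + 1 < m,
          e = {⟨a, by omega⟩, ⟨a + 1, h⟩}} ∪
        {({⟨0, by omega⟩, ⟨m - 1, by omega⟩} : Finset (Fin m))}).ncard ≤ m := by
    refine le_trans (Set.ncard_le_ncard hRsub hRfin) ?_
    refine le_trans (Set.ncard_image_le (Set.finite_Iio m)) ?_
    rw [show (Set.Iio m) = ((Finset.Iio m : Finset ℕ) : Set ℕ) by rw [Finset.coe_Iio],
      Set.ncard_coe_finset, Nat.card_Iio]
  have hLcard : ({e : Finset (Fin m) | ∃ t : ZMod m, e = {σ t, σ (t + 1)}}).ncard = m := by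
    have hL : {e : Finset (Fin m) | ∃ t : ZMod m, e = {σ t, σ (t + 1)}} =
        (fun t : ZMod m => ({σ t, σ (t + 1)} : Finset (Fin m))) '' Set.univ := by
      ext e
      simp only [Set.mem_setOf_eq, Set.image_univ, Set.mem_range]
      exact ⟨fun ⟨t, h⟩ => ⟨t, h.symm⟩, fun ⟨t, h⟩ => ⟨t, h.symm⟩⟩
    rw [hL, Set.ncard_image_of_injective _ hfinj, Set.ncard_univ, Nat.card_zmod]
  exact Set.eq_of_subset_of_ncard_le hsub (by rw [hLcard]; exact hRcard)
    (hRfin.subset hRsub)
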